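/- Let n ≥ 2, let U ⊆ ℝⁿ be an open set, let f : U → ℝ be three times continuously differentiable, let S : U → M_n(ℝ) be a continuously differentiable matrix-valued map, and let R ∈ ℝ. Suppose that for every x ∈ U one has tr(S(x)) = R and the flat Miao–Tam equation −(Δf(x))·I + Hess f(x) − f(x)·S(x) = I, where Hess f(x) is the matrix with entries (∂_i∂_j f)(x), Δf(x) = tr(Hess f(x)), and I is the identity matrix. Then for every x ∈ U and all indices i, j, k one has f(x)·(∂_i S_{jk}(x) − ∂_j S_{ik}(x)) = (R/(n−1))·(∂_i f(x)·δ_{jk} − ∂_j f(x)·δ_{ik}) − (∂_i f(x)·S_{jk}(x) − ∂_j f(x)·S_{ik}(x)), where δ is the Kronecker delta. -/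

import Mathlib

attribute [local instance] Matrix.normedAddCommGroup Matrix.normedSpace

/-- Partial derivative in the `i`-th coordinate direction of a real-valued
function on `ℝⁿ` (modeled as `Fin n → ℝ`). -/
noncomputable def pd {n : ℕ} (i : Fin n) (g : (Fin n → ℝ) → ℝ)
    (x : Fin n → ℝ) : ℝ :=
  fderiv ℝ g x (Pi.single i 1)

/-- The Hessian matrix of `f : ℝⁿ → ℝ` at `x`, with entries `∂_i ∂_j f (x)`. -/
noncomputable def hess {n : ℕ} (f : (Fin n → ℝ) → ℝ) (x : Fin n → ℝ) :
    Matrix (Fin n) (Fin n) ℝ :=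
  Matrix.of fun i j => pd i (fun y => pd j f y) x

/-!
Taking the trace of the Miao–Tam equation gives `(n - 1) Δf + R f = -n`, so the equation reads
`f S = (R f + 1)/(n - 1) · I + Hess f`. Differentiating its `(j, k)` entry in direction `i`
and antisymmetrising in `i, j` cancels the third derivatives `∂_i ∂_j ∂_k f`, which are
symmetric in `i, j`.
-/

open Filter Topology

section PartialDerivative

variable {n : ℕ} {g h : (Fin n → ℝ) → ℝ} {x : Fin n → ℝ}

theorem pd_congr_of_eventuallyEq (i : Fin n) (hgh : g =ᶠ[𝓝 x] h) : pd i g x = pd i h x := by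
  rw [pd, pd, hgh.fderiv_eq]

theorem pd_add_const (i : Fin n) (c : ℝ) : pd i (fun y => g y + c) x = pd i g x := by
  rw [pd, pd, fderiv_add_const]

theorem pd_add (i : Fin n) (hg : DifferentiableAt ℝ g x) (hh : DifferentiableAt ℝ h x) :
    pd i (fun y => g y + h y) x = pd i g x + pd i h x := by
  rw [pd, pd, pd, fderiv_fun_add hg hh, add_apply]

theorem pd_const_mul (i : Fin n) (c : ℝ) (hg : DifferentiableAt ℝ g x) :
    pd i (fun y => c * g y) x = c * pd i g x := by
  rw [pd, pd, fderiv_const_mul hg, smul_apply, smul_eq_mul]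

theorem pd_mul (i : Fin n) (hg : DifferentiableAt ℝ g x) (hh : DifferentiableAt ℝ h x) :
    pd i (fun y => g y * h y) x = pd i g x * h x + g x * pd i h x := by
  rw [pd, pd, pd, fderiv_fun_mul hg hh]
  simp only [add_apply, smul_apply, smul_eq_mul]
  ring

theorem ContDiffOn.pd {m k : WithTop ℕ∞} {U : Set (Fin n → ℝ)} (hg : ContDiffOn ℝ k g U)
    (hU : IsOpen U) (hmk : m + 1 ≤ k) (i : Fin n) : ContDiffOn ℝ m (pd i g) U :=
  (hg.fderiv_of_isOpen hU hmk).clm_apply contDiffOn_const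

theorem pd_pd_eq_fderiv_fderiv (hg : DifferentiableAt ℝ (fderiv ℝ g) x) (i j : Fin n) :
    pd i (pd j g) x = fderiv ℝ (fderiv ℝ g) x (Pi.single i 1) (Pi.single j 1) := by
  change fderiv ℝ (fun y => fderiv ℝ g y (Pi.single j 1)) x (Pi.single i 1) = _
  rw [fderiv_clm_apply hg (differentiableAt_const _)]
  simp

theorem pd_pd_comm (hg : ContDiffAt ℝ 2 g x) (i j : Fin n) :
    pd i (pd j g) x = pd j (pd i g) x := by
  have hdg : DifferentiableAt ℝ (fderiv ℝ g) x :=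
    (hg.fderiv_right (m := 1) le_rfl).differentiableAt one_ne_zero
  rw [pd_pd_eq_fderiv_fderiv hdg, pd_pd_eq_fderiv_fderiv hdg,
    hg.isSymmSndFDerivAt (by simp)]

end PartialDerivative

theorem Matrix.smul_eq_of_miaoTam {ι : Type*} [Fintype ι] [DecidableEq ι]
    {H S : Matrix ι ι ℝ} {a R : ℝ} (hcard : (Fintype.card ι : ℝ) ≠ 1) (htr : S.trace = R)
    (heq : -H.trace • (1 : Matrix ι ι ℝ) + H - a • S = 1) :
    a • S = ((R * a + 1) / (Fintype.card ι - 1)) • (1 : Matrix ι ι ℝ) + H := by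
  have hcard' : (Fintype.card ι : ℝ) - 1 ≠ 0 := sub_ne_zero.mpr hcard
  have htrace : H.trace = -(R * a + Fintype.card ι) / (Fintype.card ι - 1) := by
    have := congrArg Matrix.trace heq
    simp only [Matrix.trace_sub, Matrix.trace_add, Matrix.trace_smul, Matrix.trace_one,
      htr, smul_eq_mul] at this
    field_simp
    linarith
  have hcoeff : -H.trace - 1 = (R * a + 1) / (Fintype.card ι - 1) := by
    rw [htrace]
    field_simp
    ring
  calc a • S = -H.trace • (1 : Matrix ι ι ℝ) + H - 1 :=
        eq_sub_of_add_eq' (sub_eq_iff_eq_add.mp heq).symm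
    _ = (-H.trace - 1) • (1 : Matrix ι ι ℝ) + H := by rw [sub_smul, one_smul]; abel
    _ = _ := by rw [hcoeff]

theorem pd_mul_apply_of_miaoTam {n : ℕ} {U : Set (Fin n → ℝ)} (hU : IsOpen U)
    {f : (Fin n → ℝ) → ℝ} (hf : ContDiffOn ℝ 3 f U)
    {S : (Fin n → ℝ) → Matrix (Fin n) (Fin n) ℝ} (hS : ContDiffOn ℝ 1 S U) {R : ℝ}
    (hn : (n : ℝ) ≠ 1) (htr : ∀ x ∈ U, (S x).trace = R)
    (heq : ∀ x ∈ U,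
      -(hess f x).trace • (1 : Matrix (Fin n) (Fin n) ℝ) + hess f x - f x • S x = 1)
    {x : Fin n → ℝ} (hx : x ∈ U) (i j k : Fin n) :
    pd i f x * S x j k + f x * pd i (fun y => S y j k) x =
      R / (n - 1) * (if j = k then 1 else 0) * pd i f x + pd i (pd j (pd k f)) x := by
  set δ : ℝ := if j = k then 1 else 0
  have hxU : U ∈ 𝓝 x := hU.mem_nhds hx
  have hentry : ∀ y ∈ U,
      f y * S y j k = R / (n - 1) * δ * f y + pd j (pd k f) y + δ / (n - 1) := by
    intro y hy
    have hmat := Matrix.smul_eq_of_miaoTam (by simpa using hn) (htr y hy) (heq y hy)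
    have := congrFun (congrFun hmat j) k
    simp only [Matrix.smul_apply, Matrix.add_apply, Matrix.one_apply, smul_eq_mul,
      Fintype.card_fin] at this
    rw [this]
    change _ + pd j (pd k f) y = _
    ring
  have hdf : DifferentiableAt ℝ f x := (hf.contDiffAt hxU).differentiableAt (by norm_num)
  have hdS : DifferentiableAt ℝ (fun y => S y j k) x := by
    have hdSx := (hS.contDiffAt hxU).differentiableAt one_ne_zero
    exact differentiableAt_pi.1 (differentiableAt_pi.1 hdSx j) k
  have hdH : DifferentiableAt ℝ (pd j (pd k f)) x :=
    (((hf.pd hU (m := 2) (by norm_num) k).pd hU (m := 1) (by norm_num) j).contDiffAt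
      hxU).differentiableAt one_ne_zero
  calc pd i f x * S x j k + f x * pd i (fun y => S y j k) x
      = pd i (fun y => f y * S y j k) x := (pd_mul i hdf hdS).symm
    _ = pd i (fun y => R / (n - 1) * δ * f y + pd j (pd k f) y + δ / (n - 1)) x :=
      pd_congr_of_eventuallyEq i (eventually_of_mem hxU hentry)
    _ = R / (n - 1) * δ * pd i f x + pd i (pd j (pd k f)) x := by
      rw [pd_add_const, pd_add i (hdf.const_mul _) hdH, pd_const_mul i _ hdf]

/-- Euclidean (flat) instance of Lemma 2.1 of the paper: if `f : U → ℝ` is `C³`,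
`S : U → Mₙ(ℝ)` is `C¹` with constant trace `R`, and the flat Miao–Tam equation
`-(Δf)·I + Hess f - f·S = I` holds on the open set `U`, then
`f(∂_i S_{jk} - ∂_j S_{ik}) = (R/(n-1))(∂_i f δ_{jk} - ∂_j f δ_{ik})
  - (∂_i f S_{jk} - ∂_j f S_{ik})` on `U`. -/
theorem flat_miao_tam_cotton_identity (n : ℕ) (hn : 2 ≤ n)
    (U : Set (Fin n → ℝ)) (hU : IsOpen U)
    (f : (Fin n → ℝ) → ℝ) (hf : ContDiffOn ℝ 3 f U)
    (S : (Fin n → ℝ) → Matrix (Fin n) (Fin n) ℝ) (hS : ContDiffOn ℝ 1 S U)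
    (R : ℝ) (htr : ∀ x ∈ U, Matrix.trace (S x) = R)
    (heq : ∀ x ∈ U,
      (-(Matrix.trace (hess f x))) • (1 : Matrix (Fin n) (Fin n) ℝ) +
          hess f x - f x • S x = 1) :
    ∀ x ∈ U, ∀ i j k : Fin n,
      f x * (pd i (fun y => S y j k) x - pd j (fun y => S y i k) x) =
        (R / ((n : ℝ) - 1)) *
            (pd i f x * (if j = k then (1 : ℝ) else 0) -
              pd j f x * (if i = k then (1 : ℝ) else 0)) -
          (pd i f x * S x j k - pd j f x * S x i k) := by
  intro x hx i j k
  have hn' : (n : ℝ) ≠ 1 := by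
    have : (2 : ℝ) ≤ n := by exact_mod_cast hn
    linarith
  have hsym : pd i (pd j (pd k f)) x = pd j (pd i (pd k f)) x :=
    pd_pd_comm ((hf.pd hU (m := 2) (by norm_num) k).contDiffAt (hU.mem_nhds hx)) i j
  linear_combination pd_mul_apply_of_miaoTam hU hf hS hn' htr heq hx i j k -
    pd_mul_apply_of_miaoTam hU hf hS hn' htr heq hx j i k + hsym
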